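/- arXiv:1209.1074 — 2 statements merged into one kernel-verified Lean document; each statement's English description precedes it below -/
import Mathlib

section
/- (Descending chain condition) Let (X, W) be a wallspace and let c be a 0-cube of the dual cube complex. Order ordered pairs of subsets of X by (U, V) ⪯ (U', V') if and only if U ⊊ U', or U = U' and V ⊇ V'; write ≺ for strict inequality. Then there is no infinite sequence of wall indices i₀, i₁, i₂, … such that c(i_{k+1}) ≺ c(i_k) for all k, where c(i) denotes the ordered pair (←c(i), →c(i)). -/
open Pointwise

/-- A wallspace on a set `X`: an indexed family of walls `W i = (U i, V i)` whose closed
halfspaces cover `X`, such that each point betwixts only finitely many walls, any two points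
are separated by only finitely many walls, and there are no duplicate genuine partitions. -/
structure Wallspace (X : Type*) (ι : Type*) where
  U : ι → Set X
  V : ι → Set X
  cover : ∀ i, U i ∪ V i = Set.univ
  betwixt_finite : ∀ x : X, {i : ι | x ∈ U i ∩ V i}.Finite
  sep_finite : ∀ x y : X, {i : ι |
      (x ∈ U i \ V i ∧ y ∈ V i \ U i) ∨ (x ∈ V i \ U i ∧ y ∈ U i \ V i)}.Finite
  no_dup_partition : ∀ i j, i ≠ j →
    ((U i = U j ∧ V i = V j) ∨ (U i = V j ∧ V i = U j)) →
    U i ∩ V i = ∅ → ¬((U i).Nonempty ∧ (V i).Nonempty)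

namespace Wallspace

variable {X ι : Type*} (W : Wallspace X ι)

/-- The closed halfspace of wall `i` selected by `b` (`true ↦ U i`, `false ↦ V i`). -/
def side (i : ι) : Bool → Set X
  | true => W.U i
  | false => W.V i

/-- The open halfspace of wall `i` on the side `b`. -/
def openSide (i : ι) (b : Bool) : Set X :=
  W.side i b \ W.side i (!b)

/-- The wall `i` separates the points `x` and `y`: they lie in distinct open halfspaces. -/
def Separates (i : ι) (x y : X) : Prop :=
  (x ∈ W.U i \ W.V i ∧ y ∈ W.V i \ W.U i) ∨
  (x ∈ W.V i \ W.U i ∧ y ∈ W.U i \ W.V i)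

/-- A `0`-cube of the dual cube complex: an orientation `c` of the walls (where `c i` selects
the left halfspace `W.side i (c i)` of the wall `i`) such that any two left halfspaces meet
and every point lies in all but finitely many left halfspaces. -/
def IsZeroCube (c : ι → Bool) : Prop :=
  (∀ i j : ι, (W.side i (c i) ∩ W.side j (c j)).Nonempty) ∧
  (∀ x : X, {i : ι | x ∉ W.side i (c i)}.Finite)

/-- Distinct walls `i ≠ j` are transverse if all four intersections of closed halfspaces
are nonempty. -/
def Transverse (i j : ι) : Prop :=
  i ≠ j ∧ (W.U i ∩ W.U j).Nonempty ∧ (W.U i ∩ W.V j).Nonempty ∧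
    (W.V i ∩ W.U j).Nonempty ∧ (W.V i ∩ W.V j).Nonempty

/-- The wall `i` is reversible at the `0`-cube `c`: the orientation agreeing with `c` except
that the pair at `i` is swapped is again a `0`-cube. -/
def Reversible (c : ι → Bool) (i : ι) : Prop :=
  ∀ c' : ι → Bool, c' i = !(c i) → (∀ j, j ≠ i → c' j = c j) → W.IsZeroCube c'

/-- The wall `i` crosses the subset `A` if `A` meets both closed halfspaces of `i`. -/
def Crosses (i : ι) (A : Set X) : Prop :=
  (A ∩ W.U i).Nonempty ∧ (A ∩ W.V i).Nonempty

/-- The wall `k` separates the walls `i` and `j`: some closed halfspace of `i` and some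
closed halfspace of `j` lie in distinct open halfspaces of `k`. -/
def SeparatesWalls (k i j : ι) : Prop :=
  k ≠ i ∧ k ≠ j ∧ ∃ a bi bj : Bool,
    W.side i bi ⊆ W.openSide k a ∧ W.side j bj ⊆ W.openSide k (!a)

/-- Distinct walls `i`, `j` osculate if they are not transverse and no wall separates them. -/
def Osculate (i j : ι) : Prop :=
  i ≠ j ∧ ¬ W.Transverse i j ∧ ∀ k : ι, ¬ W.SeparatesWalls k i j

/-- Two `0`-cubes are adjacent if they differ at exactly one wall index. -/
def Adjacent (c d : ι → Bool) : Prop :=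
  W.IsZeroCube c ∧ W.IsZeroCube d ∧ ∃! i : ι, c i ≠ d i

end Wallspace

/-- A group `G` acts on the wallspace `W` if it acts on `X` and on the index set so that
the unordered pair of halfspaces of `g • i` is the `g`-translate of that of `i`. -/
def WallspaceAction (G : Type*) [Group G] {X ι : Type*} [MulAction G X] [MulAction G ι]
    (W : Wallspace X ι) : Prop :=
  ∀ (g : G) (i : ι),
    (W.U (g • i) = g • W.U i ∧ W.V (g • i) = g • W.V i) ∨
    (W.U (g • i) = g • W.V i ∧ W.V (g • i) = g • W.U i)

/-- The partial order `⪯` on ordered pairs of subsets of `X`: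
`(U, V) ⪯ (U', V')` iff `U ⊊ U'`, or `U = U'` and `V ⊇ V'`. -/
def pairLe {X : Type*} (p q : Set X × Set X) : Prop :=
  p.1 ⊂ q.1 ∨ (p.1 = q.1 ∧ q.2 ⊆ p.2)

/-- Strict version of `pairLe`. -/
def pairLt {X : Type*} (p q : Set X × Set X) : Prop :=
  pairLe p q ∧ p ≠ q

/- A strictly `≺`-descending chain of walls of `c` is strictly descending in the lexicographic
order on `Set X × (Set X)ᵒᵈ`, so it never repeats a wall and its left halfspaces decrease.
If they ever drop, a point of the dropped part lies outside infinitely many left halfspaces,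
which a `0`-cube forbids. Otherwise the right halfspaces strictly increase, and a point added
at the first step lies in both halfspaces of all later walls, contradicting finite betwixting. -/

open Function Filter OrderDual

theorem pairLt_iff_toLex_lt {X : Type*} {p q : Set X × Set X} :
    pairLt p q ↔ toLex (p.1, toDual p.2) < toLex (q.1, toDual q.2) := by
  rw [Prod.Lex.toLex_lt_toLex, pairLt, pairLe, toDual_lt_toDual]
  obtain ⟨p₁, p₂⟩ := p
  obtain ⟨q₁, q₂⟩ := q
  constructor
  · rintro ⟨h | ⟨rfl, h⟩, hne⟩
    · exact Or.inl h
    · exact Or.inr ⟨rfl, h.ssubset_of_ne fun he => hne (Prod.ext rfl he.symm)⟩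
  · rintro (h | ⟨rfl, h⟩)
    · exact ⟨Or.inl h, fun he => h.ne (congrArg Prod.fst he)⟩
    · exact ⟨Or.inr ⟨rfl, h.subset⟩, fun he => h.ne (congrArg Prod.snd he).symm⟩

theorem Set.Finite.eventually_atTop_notMem_of_injective {ι : Type*} {S : Set ι} (hS : S.Finite)
    {i : ℕ → ι} (hi : Injective i) : ∀ᶠ m in atTop, i m ∉ S :=
  Nat.cofinite_eq_atTop ▸ hi.tendsto_cofinite hS.compl_mem_cofinite

namespace Wallspace

variable {X ι : Type*} (W : Wallspace X ι)

theorem side_union_side_not (i : ι) (b : Bool) : W.side i b ∪ W.side i (!b) = Set.univ := by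
  cases b
  · exact (Set.union_comm _ _).trans (W.cover i)
  · exact W.cover i

theorem side_inter_side_not (i : ι) (b : Bool) :
    W.side i b ∩ W.side i (!b) = W.U i ∩ W.V i := by
  cases b
  · exact Set.inter_comm _ _
  · rfl

variable {W} {c : ι → Bool} {i : ℕ → ι}

theorem IsZeroCube.side_eq_of_antitone (hc : W.IsZeroCube c) (hi : Injective i)
    (hA : Antitone fun k => W.side (i k) (c (i k))) (k : ℕ) :
    W.side (i k) (c (i k)) = W.side (i 0) (c (i 0)) := by
  by_contra hne
  obtain ⟨x, hx0, hxk⟩ := Set.exists_of_ssubset ((hA k.zero_le).ssubset_of_ne hne)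
  obtain ⟨m, hm, hkm⟩ :=
    (((hc.2 x).eventually_atTop_notMem_of_injective hi).and (eventually_ge_atTop k)).exists
  exact hm fun hxm => hxk (hA hkm hxm)

theorem not_strictMono_side_not_of_side_eq (hi : Injective i)
    (hA : ∀ k, W.side (i k) (c (i k)) = W.side (i 0) (c (i 0))) :
    ¬ StrictMono fun k => W.side (i k) (!(c (i k))) := by
  intro hB
  obtain ⟨x, hx1, hx0⟩ := Set.exists_of_ssubset (hB zero_lt_one)
  have hxA : x ∈ W.side (i 0) (c (i 0)) :=
    (Set.eq_univ_iff_forall.1 (W.side_union_side_not _ _) x).resolve_right hx0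
  obtain ⟨m, hm, h1m⟩ :=
    (((W.betwixt_finite x).eventually_atTop_notMem_of_injective hi).and
      (eventually_ge_atTop 1)).exists
  have hxAm : x ∈ W.side (i m) (c (i m)) := (hA m).symm ▸ hxA
  exact hm ((W.side_inter_side_not _ _).subset ⟨hxAm, hB.monotone h1m hx1⟩)

end Wallspace

/-- **Descending chain condition.**  For a `0`-cube `c` of the dual cube complex of a
wallspace, there is no infinite sequence of wall indices `i 0, i 1, …` with
`c (i (k+1)) ≺ c (i k)` for all `k`, where `c i` denotes the ordered pair
`(←c(i), →c(i))` of halfspaces oriented by `c`. -/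
theorem descending_chain_condition
    {X ι : Type*} (W : Wallspace X ι)
    (c : ι → Bool) (hc : W.IsZeroCube c) :
    ¬ ∃ i : ℕ → ι, ∀ k : ℕ,
      pairLt (W.side (i (k + 1)) (c (i (k + 1))), W.side (i (k + 1)) (!(c (i (k + 1)))))
             (W.side (i k) (c (i k)), W.side (i k) (!(c (i k)))) := by
  rintro ⟨i, h⟩
  have hlex : StrictAnti fun k =>
      toLex (W.side (i k) (c (i k)), toDual (W.side (i k) (!(c (i k))))) :=
    strictAnti_nat_of_succ_lt fun k => pairLt_iff_toLex_lt.1 (h k)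
  have hi : Injective i := fun a b hab => hlex.injective (by simp only [hab])
  have hA := hc.side_eq_of_antitone hi (Prod.Lex.monotone_fst_ofLex.comp_antitone hlex.antitone)
  refine W.not_strictMono_side_not_of_side_eq hi hA (strictMono_nat_of_lt_succ fun k => ?_)
  have hk := hlex (Nat.lt_succ_self k)
  dsimp only at hk
  rw [hA k, hA (k + 1), Prod.Lex.toLex_lt_toLex] at hk
  simpa using hk
end

section
/- (Transverse implies close) Let G be a group with finite generating set S, and let H_i and H_j be finitely generated subgroups of G. Let {U_i, V_i} be an H_i-wall and {U_j, V_j} an H_j-wall. Then there exists D such that for all g, g' ∈ G: if the walls g{U_i, V_i} and g'{U_j, V_j} are transverse (all four intersections gU_i ∩ g'U_j, gU_i ∩ g'V_j, gV_i ∩ g'U_j, gV_i ∩ g'V_j are nonempty), then d_S(gH_i, g'H_j) < D, i.e., there exist h ∈ H_i and h' ∈ H_j with (gh)⁻¹(g'h') a product of fewer than D elements of S ∪ S⁻¹. -/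
/-!
Thicken the two cosets to `A = g Hᵢ Fᵢ` and `B = g' Hⱼ Fⱼ`, with `Fᵢ`, `Fⱼ` finite and chosen so
that each thickening contains the overlap and the frontiers of its own wall. If `A` has points
on both sides of `g' Uⱼ`, a walk between them through `g Hᵢ` (using the finitely many generators
of `Hᵢ`, conjugated by elements of `Fᵢ`) crosses the frontier of `g' Uⱼ`, which lies in `B`, at
bounded distance from `A`; symmetrically for `B` and `g Uᵢ`. Otherwise `A` lies in a halfspace
of the second wall and `B` in one of the first. Transversality then gives a point in the opposite
quarter, and a path from it back into the halfspaces first hits a frontier point, which by the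
nesting lies in `A ∩ B`.
-/

open Pointwise

/-- `g` is a product of fewer than `D` elements of `S ∪ S⁻¹`. -/
def HasWordLengthLT {G : Type*} [Group G] (S : Set G) (g : G) (D : ℝ) : Prop :=
  ∃ l : List G, (∀ a ∈ l, a ∈ S ∨ a⁻¹ ∈ S) ∧ l.prod = g ∧ (l.length : ℝ) < D

/-- Subsets `A`, `B` of `G` are `D`-close with respect to the generating set `S`. -/
def DClose {G : Type*} [Group G] (S : Set G) (D : ℝ) (A B : Set G) : Prop :=
  ∃ a ∈ A, ∃ b ∈ B, HasWordLengthLT S (a⁻¹ * b) D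

/-- `H` has bounded packing in `G` (with respect to the generating set `S`): for each `D > 0`
there exists `k` such that every collection of pairwise `D`-close left cosets of `H` has
cardinality at most `k`. -/
def BoundedPacking {G : Type*} [Group G] (S : Set G) (H : Subgroup G) : Prop :=
  ∀ D : ℝ, 0 < D → ∃ k : ℕ, ∀ C : Set (Set G),
    (∀ A ∈ C, ∃ g : G, A = g • (H : Set G)) →
    C.Pairwise (DClose S D) → C.Finite ∧ C.ncard ≤ k

/-- The frontier of `A ⊆ G` with respect to the finite generating set `S`. -/
def frontierIn {G : Type*} [Group G] (S : Finset G) (A : Set G) : Set G :=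
  {a : G | a ∈ A ∧ ∃ s : G, (s ∈ S ∨ s⁻¹ ∈ S) ∧ a * s ∉ A}

/-- `A` is `H`-finite: `A ⊆ H · F` for some finite `F`. -/
def HSetFinite {G : Type*} [Group G] (H : Set G) (A : Set G) : Prop :=
  ∃ F : Finset G, A ⊆ H * (F : Set G)

/-- An `H`-wall `{U, V}` in `G`: the halfspaces cover `G`, the pair is `H`-invariant,
`U ∩ V` is `H`-finite, and `U` and `V` have `Ḧ`-finite frontiers, where
`Ḧ = {h ∈ H : hU = U ∧ hV = V}`. -/
structure IsHWall {G : Type*} [Group G] (S : Finset G) (H : Subgroup G)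
    (U V : Set G) : Prop where
  cover : U ∪ V = Set.univ
  invar : ∀ h ∈ H, (h • U = U ∧ h • V = V) ∨ (h • U = V ∧ h • V = U)
  inter_hfinite : HSetFinite (H : Set G) (U ∩ V)
  frontierU : HSetFinite {h : G | h ∈ H ∧ h • U = U ∧ h • V = V} (frontierIn S U)
  frontierV : HSetFinite {h : G | h ∈ H ∧ h • U = U ∧ h • V = V} (frontierIn S V)

section WordLength

variable {G : Type*} [Group G]

def WordLengthLE (S : Finset G) (n : ℕ) (g : G) : Prop :=
  ∃ l : List G, (∀ a ∈ l, a ∈ S ∨ a⁻¹ ∈ S) ∧ l.prod = g ∧ l.length ≤ n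

variable {S : Finset G} {m n : ℕ} {g g' : G}

theorem WordLengthLE.mono (h : WordLengthLE S m g) (hmn : m ≤ n) : WordLengthLE S n g :=
  let ⟨l, hl, hprod, hlen⟩ := h
  ⟨l, hl, hprod, hlen.trans hmn⟩

theorem WordLengthLE.one : WordLengthLE S 0 (1 : G) :=
  ⟨[], by simp, rfl, le_rfl⟩

theorem WordLengthLE.of_mem (hg : g ∈ S ∨ g⁻¹ ∈ S) : WordLengthLE S 1 g :=
  ⟨[g], by simpa using hg, by simp, le_rfl⟩

theorem WordLengthLE.mul (h : WordLengthLE S m g) (h' : WordLengthLE S n g') :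
    WordLengthLE S (m + n) (g * g') := by
  obtain ⟨l, hl, rfl, hlen⟩ := h
  obtain ⟨l', hl', rfl, hlen'⟩ := h'
  refine ⟨l ++ l', ?_, List.prod_append .., by simp only [List.length_append]; omega⟩
  simpa only [List.mem_append, or_imp, forall_and] using ⟨hl, hl'⟩

theorem WordLengthLE.inv (h : WordLengthLE S n g) : WordLengthLE S n g⁻¹ := by
  obtain ⟨l, hl, rfl, hlen⟩ := h
  refine ⟨(l.map (·⁻¹)).reverse, fun a ha => ?_, (List.prod_inv_reverse l).symm,
    by simpa using hlen⟩
  obtain ⟨b, hb, rfl⟩ := List.mem_map.mp (List.mem_reverse.mp ha)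
  simpa [or_comm] using hl b hb

theorem WordLengthLE.mem_closure (h : WordLengthLE S n g) :
    g ∈ Subgroup.closure (S : Set G) := by
  obtain ⟨l, hl, rfl, -⟩ := h
  refine list_prod_mem fun a ha => ?_
  rcases hl a ha with h | h
  · exact Subgroup.subset_closure h
  · simpa using (Subgroup.closure (S : Set G)).inv_mem (Subgroup.subset_closure h)

theorem exists_wordLengthLE_of_mem_closure (hg : g ∈ Subgroup.closure (S : Set G)) :
    ∃ n, WordLengthLE S n g := by
  induction hg using Subgroup.closure_induction with
  | mem a ha => exact ⟨1, .of_mem (Or.inl ha)⟩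
  | one => exact ⟨0, .one⟩
  | mul a b _ _ ha hb => exact ⟨_, ha.choose_spec.mul hb.choose_spec⟩
  | inv a _ ha => exact ⟨_, ha.choose_spec.inv⟩

theorem exists_wordLengthLE_of_finset (hS : Subgroup.closure (S : Set G) = ⊤) (F : Finset G) :
    ∃ M, ∀ f ∈ F, WordLengthLE S M f := by
  choose N hN using fun f : G => exists_wordLengthLE_of_mem_closure (hS ▸ Subgroup.mem_top f)
  exact ⟨F.sup N, fun f hf => (hN f).mono (Finset.le_sup hf)⟩

end WordLength

section Frontier

variable {G : Type*} [Group G] {S : Finset G}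

theorem frontierIn_smul (x : G) (P : Set G) : frontierIn S (x • P) = x • frontierIn S P := by
  ext z
  simp only [frontierIn, Set.mem_smul_set_iff_inv_smul_mem, Set.mem_ofPred_eq, smul_eq_mul,
    mul_assoc]

theorem mul_mem_frontierIn {P : Set G} {z s : G} (hs : s ∈ S ∨ s⁻¹ ∈ S) (hz : z ∉ P)
    (hzs : z * s ∈ P) : z * s ∈ frontierIn S P :=
  ⟨hzs, s⁻¹, by rwa [inv_inv, or_comm], by rwa [mul_inv_cancel_right]⟩

theorem exists_mem_frontierIn_of_wordLengthLE {P : Set G} {x g : G} {n : ℕ} (hx : x ∈ P)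
    (hxg : x * g ∉ P) (hg : WordLengthLE S n g) :
    ∃ z ∈ frontierIn S P, WordLengthLE S n (x⁻¹ * z) := by
  obtain ⟨l, hl, rfl, hlen⟩ := hg
  suffices ∃ z ∈ frontierIn S P, WordLengthLE S l.length (x⁻¹ * z) from
    let ⟨z, hz, hxz⟩ := this; ⟨z, hz, hxz.mono hlen⟩
  clear hlen
  induction l generalizing x with
  | nil => simp_all
  | cons a l ih =>
    have ha := hl a List.mem_cons_self
    by_cases hxa : x * a ∈ P
    · obtain ⟨z, hz, hxz⟩ := ih (x := x * a) hxa
        (fun b hb => hl b (List.mem_cons_of_mem _ hb)) (by simpa [mul_assoc] using hxg)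
      refine ⟨z, hz, ?_⟩
      simpa [mul_assoc, add_comm] using (WordLengthLE.of_mem ha).mul hxz
    · exact ⟨x, ⟨hx, a, ha, hxa⟩, by simpa using WordLengthLE.one.mono (Nat.zero_le _)⟩

end Frontier

section Walls

variable {G : Type*} [Group G] {S : Finset G}

theorem inter_nonempty_of_nested (hS : Subgroup.closure (S : Set G) = ⊤)
    {X X' Y Y' A B : Set G} (hfX : frontierIn S X ⊆ A) (hXX' : X ∩ X' ⊆ A)
    (hfY : frontierIn S Y ⊆ B) (hYY' : Y ∩ Y' ⊆ B) (hAY : A ⊆ Y) (hBX : B ⊆ X)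
    {a b : G} (ha : a ∈ X' ∩ Y') (hb : b ∈ X) : (A ∩ B).Nonempty := by
  by_cases haX : a ∈ X
  · have haA := hXX' ⟨haX, ha.1⟩
    exact ⟨a, haA, hYY' ⟨hAY haA, ha.2⟩⟩
  by_cases haY : a ∈ Y
  · have haB := hYY' ⟨haY, ha.2⟩
    exact ⟨a, hXX' ⟨hBX haB, ha.1⟩, haB⟩
  obtain ⟨n, hn⟩ := exists_wordLengthLE_of_mem_closure (hS ▸ Subgroup.mem_top (a⁻¹ * b))
  obtain ⟨z, ⟨hz, s, hs, hzs⟩, -⟩ := exists_mem_frontierIn_of_wordLengthLE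
    (P := (X ∪ Y)ᶜ) (x := a) (by simp [haX, haY]) (by simp [hb]) hn
  rw [Set.mem_compl_iff, Set.mem_union, not_or] at hz
  rw [Set.notMem_compl_iff] at hzs
  rcases hzs with hzsX | hzsY
  · have hA := hfX (mul_mem_frontierIn hs hz.1 hzsX)
    exact ⟨z * s, hA, hfY (mul_mem_frontierIn hs hz.2 (hAY hA))⟩
  · have hB := hfY (mul_mem_frontierIn hs hz.2 hzsY)
    exact ⟨z * s, hfX (mul_mem_frontierIn hs hz.1 (hBX hB)), hB⟩

theorem inter_nonempty_of_transverse (hS : Subgroup.closure (S : Set G) = ⊤)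
    {X X' Y Y' A B : Set G} (hfX : frontierIn S X ⊆ A) (hfX' : frontierIn S X' ⊆ A)
    (hXX' : X ∩ X' ⊆ A) (hfY : frontierIn S Y ⊆ B) (hfY' : frontierIn S Y' ⊆ B)
    (hYY' : Y ∩ Y' ⊆ B) (hA : A ⊆ Y ∨ A ⊆ Y') (hB : B ⊆ X ∨ B ⊆ X')
    (hXY : (X ∩ Y).Nonempty) (hXY' : (X ∩ Y').Nonempty)
    (hX'Y : (X' ∩ Y).Nonempty) (hX'Y' : (X' ∩ Y').Nonempty) : (A ∩ B).Nonempty := by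
  have hX'X : X' ∩ X ⊆ A := Set.inter_comm X' X ▸ hXX'
  have hY'Y : Y' ∩ Y ⊆ B := Set.inter_comm Y' Y ▸ hYY'
  rcases hA with hA | hA <;> rcases hB with hB | hB
  · exact inter_nonempty_of_nested hS hfX hXX' hfY hYY' hA hB hX'Y'.some_mem hXY.some_mem.1
  · exact inter_nonempty_of_nested hS hfX' hX'X hfY hYY' hA hB hXY'.some_mem hX'Y.some_mem.1
  · exact inter_nonempty_of_nested hS hfX hXX' hfY' hY'Y hA hB hX'Y.some_mem hXY'.some_mem.1
  · exact inter_nonempty_of_nested hS hfX' hX'X hfY' hY'Y hA hB hXY.some_mem hX'Y'.some_mem.1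

end Walls

theorem subset_or_subset_of_not_straddle {α : Type*} {A Y Y' : Set α}
    (hcover : Y ∪ Y' = Set.univ) (h : ¬((A ∩ Y).Nonempty ∧ (A \ Y).Nonempty)) :
    A ⊆ Y ∨ A ⊆ Y' := by
  rw [not_and_or, Set.not_nonempty_iff_eq_empty, Set.not_nonempty_iff_eq_empty,
    Set.sdiff_eq_empty] at h
  rcases h with h | h
  · exact Or.inr ((Set.disjoint_iff_inter_eq_empty.mpr h).subset_compl_right.trans
      (Set.compl_subset_iff_union.mpr hcover))
  · exact Or.inl h

section Cosets

variable {G : Type*} [Group G] {S : Finset G}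

theorem exists_near_frontierIn_of_straddle {T F : Finset G} {M N : ℕ}
    (hT : ∀ a ∈ T, WordLengthLE S N a) (hF : ∀ f ∈ F, WordLengthLE S M f) {P : Set G} {x : G}
    (hin : (x • ((Subgroup.closure (T : Set G) : Set G) * F) ∩ P).Nonempty)
    (hout : (x • ((Subgroup.closure (T : Set G) : Set G) * F) \ P).Nonempty) :
    ∃ p ∈ x • ((Subgroup.closure (T : Set G) : Set G) * F), ∃ z ∈ frontierIn S P,
      WordLengthLE S (2 * M + N) (p⁻¹ * z) := by
  set K := Subgroup.closure (T : Set G)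
  obtain ⟨_, ⟨_, ⟨k₁, hk₁, f₁, hf₁, rfl⟩, rfl⟩, hu⟩ := hin
  obtain ⟨_, ⟨_, ⟨k₂, hk₂, f₂, hf₂, rfl⟩, rfl⟩, hv⟩ := hout
  simp only [smul_eq_mul] at hu hv
  -- Either `x k₂ f₁` is already outside `P`, or the walk from `k₁` to `k₂` along generators
  -- of `K` leaves `{c | x c f₁ ∈ P}`; either way one step of bounded length then leaves `P`.
  have hstep : ∃ c ∈ K, x * (c * f₁) ∈ P ∧
      ∃ w, WordLengthLE S (2 * M + N) w ∧ x * (c * f₁) * w ∉ P := by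
    by_cases hk₂P : x * (k₂ * f₁) ∈ P
    · exact ⟨k₂, hk₂, hk₂P, f₁⁻¹ * f₂, ((hF f₁ hf₁).inv.mul (hF f₂ hf₂)).mono (by omega),
        by simpa [mul_assoc] using hv⟩
    obtain ⟨n, hn⟩ := exists_wordLengthLE_of_mem_closure (K.mul_mem (K.inv_mem hk₁) hk₂)
    obtain ⟨c, ⟨hc, a, ha, hca⟩, hkc⟩ := exists_mem_frontierIn_of_wordLengthLE
      (P := {c | x * (c * f₁) ∈ P}) (x := k₁) hu (by simpa using hk₂P) hn
    have haN : WordLengthLE S N a := ha.elim (hT a) fun h => by simpa using (hT _ h).inv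
    refine ⟨c, by simpa using K.mul_mem hk₁ hkc.mem_closure, hc, f₁⁻¹ * a * f₁,
      ((hF f₁ hf₁).inv.mul haN |>.mul (hF f₁ hf₁)).mono (by omega), ?_⟩
    simpa [mul_assoc] using hca
  obtain ⟨c, hc, hcP, w, hw, hwP⟩ := hstep
  obtain ⟨z, hz, hpz⟩ := exists_mem_frontierIn_of_wordLengthLE hcP hwP hw
  exact ⟨_, Set.smul_mem_smul_set (Set.mul_mem_mul hc hf₁), z, hz, hpz⟩

theorem exists_wordLengthLE_of_mem_smul_mul {H H' : Set G} {F F' : Finset G} {M M' n : ℕ}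
    (hF : ∀ f ∈ F, WordLengthLE S M f) (hF' : ∀ f ∈ F', WordLengthLE S M' f) {g g' p q : G}
    (hp : p ∈ g • (H * F)) (hq : q ∈ g' • (H' * F')) (hpq : WordLengthLE S n (p⁻¹ * q)) :
    ∃ h ∈ H, ∃ h' ∈ H', WordLengthLE S (M + n + M') ((g * h)⁻¹ * (g' * h')) := by
  obtain ⟨_, ⟨h, hh, f, hf, rfl⟩, rfl⟩ := hp
  obtain ⟨_, ⟨h', hh', f', hf', rfl⟩, rfl⟩ := hq
  refine ⟨h, hh, h', hh', ?_⟩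
  convert ((hF f hf).mul hpq).mul (hF' f' hf').inv using 1
  simp only [smul_eq_mul]
  group

theorem IsHWall.exists_finset_smul {H : Subgroup G} {U V : Set G} (hw : IsHWall S H U V) :
    ∃ F : Finset G, ∀ g : G, g • U ∩ g • V ⊆ g • ((H : Set G) * F) ∧
      frontierIn S (g • U) ⊆ g • ((H : Set G) * F) ∧
      frontierIn S (g • V) ⊆ g • ((H : Set G) * F) := by
  classical
  obtain ⟨F₁, h₁⟩ := hw.inter_hfinite
  obtain ⟨F₂, h₂⟩ := hw.frontierU
  obtain ⟨F₃, h₃⟩ := hw.frontierV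
  refine ⟨F₁ ∪ F₂ ∪ F₃, fun g => ?_⟩
  rw [frontierIn_smul, frontierIn_smul, ← Set.smul_set_inter]
  refine ⟨Set.smul_set_mono (h₁.trans (Set.mul_subset_mul subset_rfl ?_)),
    Set.smul_set_mono (h₂.trans (Set.mul_subset_mul (fun _ h => h.1) ?_)),
    Set.smul_set_mono (h₃.trans (Set.mul_subset_mul (fun _ h => h.1) ?_))⟩ <;>
  · intro x
    simp +contextual

end Cosets

/-- **Transverse implies close.**  Let `G` be a group with finite generating set `S`, and
let `Hi`, `Hj` be finitely generated subgroups with chosen `Hi`-wall `{Ui, Vi}` and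
`Hj`-wall `{Uj, Vj}`.  Then there exists `D` such that whenever the translated walls
`g{Ui, Vi}` and `g'{Uj, Vj}` are transverse, the cosets `g·Hi` and `g'·Hj` are at
`S`-distance less than `D`. -/
theorem transverse_implies_close
    {G : Type*} [Group G]
    (S : Finset G) (hS : Subgroup.closure (S : Set G) = ⊤)
    (Hi Hj : Subgroup G) (hfgi : Hi.FG) (hfgj : Hj.FG)
    (Ui Vi Uj Vj : Set G)
    (hwi : IsHWall S Hi Ui Vi) (hwj : IsHWall S Hj Uj Vj) :
    ∃ D : ℕ, ∀ g g' : G,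
      ((g • Ui) ∩ (g' • Uj)).Nonempty → ((g • Ui) ∩ (g' • Vj)).Nonempty →
      ((g • Vi) ∩ (g' • Uj)).Nonempty → ((g • Vi) ∩ (g' • Vj)).Nonempty →
      ∃ h ∈ Hi, ∃ h' ∈ Hj, ∃ l : List G,
        (∀ a ∈ l, a ∈ S ∨ a⁻¹ ∈ S) ∧ l.prod = (g * h)⁻¹ * (g' * h') ∧ l.length < D := by
  obtain ⟨Ti, rfl⟩ := hfgi
  obtain ⟨Tj, rfl⟩ := hfgj
  obtain ⟨Fi, hFi⟩ := hwi.exists_finset_smul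
  obtain ⟨Fj, hFj⟩ := hwj.exists_finset_smul
  obtain ⟨Mi, hMi⟩ := exists_wordLengthLE_of_finset hS Fi
  obtain ⟨Mj, hMj⟩ := exists_wordLengthLE_of_finset hS Fj
  obtain ⟨Ni, hNi⟩ := exists_wordLengthLE_of_finset hS Ti
  obtain ⟨Nj, hNj⟩ := exists_wordLengthLE_of_finset hS Tj
  set n := 2 * Mi + Ni + (2 * Mj + Nj)
  refine ⟨Mi + n + Mj + 1, fun g g' hUU hUV hVU hVV => ?_⟩
  set A := g • ((Subgroup.closure (Ti : Set G) : Set G) * Fi)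
  set B := g' • ((Subgroup.closure (Tj : Set G) : Set G) * Fj)
  suffices ∃ p ∈ A, ∃ q ∈ B, WordLengthLE S n (p⁻¹ * q) by
    obtain ⟨p, hp, q, hq, hpq⟩ := this
    obtain ⟨h, hh, h', hh', l, hl, hprod, hlen⟩ :=
      exists_wordLengthLE_of_mem_smul_mul hMi hMj hp hq hpq
    exact ⟨h, hh, h', hh', l, hl, hprod, by omega⟩
  obtain ⟨hUVi, hfUi, hfVi⟩ := hFi g
  obtain ⟨hUVj, hfUj, hfVj⟩ := hFj g'
  by_cases hA : (A ∩ g' • Uj).Nonempty ∧ (A \ g' • Uj).Nonempty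
  · obtain ⟨p, hp, z, hz, hpz⟩ := exists_near_frontierIn_of_straddle hNi hMi hA.1 hA.2
    exact ⟨p, hp, z, hfUj hz, hpz.mono (by omega)⟩
  by_cases hB : (B ∩ g • Ui).Nonempty ∧ (B \ g • Ui).Nonempty
  · obtain ⟨q, hq, z, hz, hqz⟩ := exists_near_frontierIn_of_straddle hNj hMj hB.1 hB.2
    exact ⟨z, hfUi hz, q, hq, by simpa using hqz.inv.mono (by omega)⟩
  have hcover (x : G) {U V : Set G} (h : U ∪ V = Set.univ) : x • U ∪ x • V = Set.univ := by
    rw [← Set.smul_set_union, h, Set.smul_set_univ]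
  obtain ⟨p, hpA, hpB⟩ := inter_nonempty_of_transverse hS hfUi hfVi hUVi hfUj hfVj hUVj
    (subset_or_subset_of_not_straddle (hcover g' hwj.cover) hA)
    (subset_or_subset_of_not_straddle (hcover g hwi.cover) hB) hUU hUV hVU hVV
  exact ⟨p, hpA, p, hpB, by simpa using WordLengthLE.one.mono (Nat.zero_le n)⟩
end
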